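/- arXiv:1203.1154 — 7 statements merged into one kernel-verified Lean document; each statement's English description precedes it below -/
import Mathlib

section
/- Let A, B be bounded positive operators on a complex Hilbert space H. Then ⟨A ξ, ξ⟩ ≤ ⟨B² ξ, ξ⟩^{1/2} for all unit vectors ξ if and only if A ≤ (1/(2t)) B² + (t/2)·I for every positive real number t. -/
/-!
On a unit vector `ξ` the operator inequality at `t` reads
`⟪A ξ, ξ⟫ ≤ ⟪B² ξ, ξ⟫ / (2t) + t / 2`, and by AM-GM the infimum over `t > 0` of
`x / (2t) + t / 2` is `√x`, attained at `t = √x`. Since a quadratic form is homogeneous of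
degree two, the Loewner order can be tested on unit vectors only.
-/

open scoped InnerProductSpace

theorem Real.le_sqrt_iff_forall_le_div_add {a x : ℝ} (hx : 0 ≤ x) :
    a ≤ Real.sqrt x ↔ ∀ t : ℝ, 0 < t → a ≤ 1 / (2 * t) * x + t / 2 := by
  have hsq := Real.sq_sqrt hx
  constructor
  · intro ha t ht
    have hamgm : Real.sqrt x * (2 * t) ≤ x + t ^ 2 := by
      nlinarith [sq_nonneg (Real.sqrt x - t)]
    calc a ≤ Real.sqrt x := ha
      _ ≤ (x + t ^ 2) / (2 * t) := (le_div_iff₀ (by positivity)).mpr hamgm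
      _ = 1 / (2 * t) * x + t / 2 := by field_simp
  · intro h
    rcases hx.eq_or_lt with rfl | hx
    · rw [Real.sqrt_zero]
      refine le_of_forall_pos_lt_add fun ε hε => ?_
      linarith [h ε hε]
    · have hs := Real.sqrt_pos.mpr hx
      calc a ≤ 1 / (2 * Real.sqrt x) * x + Real.sqrt x / 2 := h _ hs
        _ = Real.sqrt x := by field_simp; linarith

namespace ContinuousLinearMap

section RCLike

variable {𝕜 E : Type*} [RCLike 𝕜] [NormedAddCommGroup E] [InnerProductSpace 𝕜 E]

theorem forall_reApplyInnerSelf_nonneg_iff_of_norm_eq_one (T : E →L[𝕜] E) :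
    (∀ x, 0 ≤ T.reApplyInnerSelf x) ↔ ∀ x, ‖x‖ = 1 → 0 ≤ T.reApplyInnerSelf x := by
  refine ⟨fun h x _ => h x, fun h x => ?_⟩
  rcases eq_or_ne x 0 with rfl | hx
  · simp [reApplyInnerSelf_apply]
  have hx₀ : ‖x‖ ≠ 0 := norm_ne_zero_iff.mpr hx
  have hunit : ‖(‖x‖⁻¹ : 𝕜) • x‖ = 1 := by
    rw [norm_smul, norm_inv, RCLike.norm_ofReal, abs_norm, inv_mul_cancel₀ hx₀]
  have hscale : x = (‖x‖ : 𝕜) • (‖x‖⁻¹ : 𝕜) • x := by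
    rw [smul_smul, ← RCLike.ofReal_inv, ← RCLike.ofReal_mul, mul_inv_cancel₀ hx₀,
      RCLike.ofReal_one, one_smul]
  rw [hscale, reApplyInnerSelf_smul]
  exact mul_nonneg (sq_nonneg _) (h _ hunit)

theorem le_iff_forall_norm_eq_one {S T : E →L[𝕜] E} (hST : (T - S).IsSymmetric) :
    S ≤ T ↔ ∀ x, ‖x‖ = 1 → RCLike.re ⟪S x, x⟫_𝕜 ≤ RCLike.re ⟪T x, x⟫_𝕜 := by
  rw [le_def, isPositive_def, forall_reApplyInnerSelf_nonneg_iff_of_norm_eq_one]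
  simp only [hST, true_and, reApplyInnerSelf_apply, sub_apply, inner_sub_left, map_sub,
    sub_nonneg]

end RCLike

theorem re_inner_smul_add_smul_one_apply_self {E : Type*} [NormedAddCommGroup E]
    [InnerProductSpace ℂ E] (S : E →L[ℂ] E) (c d : ℝ) (x : E) :
    RCLike.re ⟪(c • S + d • (1 : E →L[ℂ] E)) x, x⟫_ℂ =
      c * RCLike.re ⟪S x, x⟫_ℂ + d * ‖x‖ ^ 2 := by
  simp [← Complex.coe_smul, ← Complex.ofReal_pow]
  ring

end ContinuousLinearMap

variable {H : Type*} [NormedAddCommGroup H] [InnerProductSpace ℂ H] [CompleteSpace H]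

theorem stmt1 (A B : H →L[ℂ] H) (hA : 0 ≤ A) (hB : 0 ≤ B) :
    (∀ ξ : H, ‖ξ‖ = 1 →
        RCLike.re ⟪A ξ, ξ⟫_ℂ ≤ Real.sqrt (RCLike.re ⟪(B ^ 2) ξ, ξ⟫_ℂ)) ↔
      ∀ t : ℝ, 0 < t → A ≤ (1 / (2 * t)) • B ^ 2 + (t / 2) • (1 : H →L[ℂ] H) := by
  have hAsa := ((ContinuousLinearMap.nonneg_iff_isPositive A).mp hA).isSelfAdjoint
  have hB2 : (B ^ 2).IsPositive := (ContinuousLinearMap.nonneg_iff_isPositive _).mp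
    ((ContinuousLinearMap.nonneg_iff_isPositive B).mp hB).isSelfAdjoint.sq_nonneg
  have hsym (t : ℝ) :
      ((1 / (2 * t)) • B ^ 2 + (t / 2) • (1 : H →L[ℂ] H) - A).IsSymmetric :=
    ((((IsSelfAdjoint.all _).smul hB2.isSelfAdjoint).add
      ((IsSelfAdjoint.all _).smul (IsSelfAdjoint.one _))).sub hAsa).isSymmetric
  simp_rw [ContinuousLinearMap.le_iff_forall_norm_eq_one (hsym _),
    ContinuousLinearMap.re_inner_smul_add_smul_one_apply_self]
  refine ⟨fun h t ht ξ hξ => ?_, fun h ξ hξ => ?_⟩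
  · rw [hξ, one_pow, mul_one]
    exact (Real.le_sqrt_iff_forall_le_div_add (hB2.re_inner_nonneg_left ξ)).mp (h ξ hξ) t ht
  · refine (Real.le_sqrt_iff_forall_le_div_add (hB2.re_inner_nonneg_left ξ)).mpr fun t ht => ?_
    simpa [hξ] using h t ht ξ hξ
end

section
/- Let A, B be bounded positive operators on a complex Hilbert space H. If there exists a contraction C (i.e., ‖C‖ ≤ 1) with C B + B C* = 2A, then A ≤ (1/(2t)) B² + (t/2)·I for every positive real t. -/
/-!
Completing the square: for self-adjoint `b` and `t > 0`,
`t⁻¹ (b - t c)(b - t c)* = t⁻¹ b² - (c b + b c*) + t c c* ≥ 0`, and `c c* ≤ ‖c‖² ≤ 1`.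
-/

open scoped InnerProductSpace

variable {H : Type*} [NormedAddCommGroup H] [InnerProductSpace ℂ H] [CompleteSpace H]

lemma smul_inv_star_sub_smul_star_mul_self {R : Type*} [Ring R] [StarRing R] [Algebra ℝ R]
    [StarModule ℝ R] {b c : R} (hb : IsSelfAdjoint b) {t : ℝ} (ht : t ≠ 0) :
    t⁻¹ • (star (b - t • star c) * (b - t • star c)) =
      t⁻¹ • b ^ 2 - (c * b + b * star c) + t • (c * star c) := by
  simp only [star_sub, star_smul, star_star, hb.star_eq, star_trivial, sub_mul, mul_sub,
    smul_mul_assoc, mul_smul_comm, smul_sub, smul_smul, pow_two, inv_mul_cancel₀ ht,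
    inv_mul_cancel_left₀ ht, one_smul]
  abel

section CStarAlgebra

variable {A : Type*} [CStarAlgebra A] [PartialOrder A] [StarOrderedRing A]

lemma CStarAlgebra.mul_star_le_one_of_norm_le_one {c : A} (hc : ‖c‖ ≤ 1) : c * star c ≤ 1 := by
  calc c * star c ≤ algebraMap ℝ A (‖c‖ ^ 2) := CStarAlgebra.mul_star_le_algebraMap_norm_sq
    _ ≤ algebraMap ℝ A 1 := by
      gcongr
      exact pow_le_one₀ (norm_nonneg c) hc
    _ = 1 := map_one _

lemma mul_add_mul_star_le_of_norm_le_one {b c : A} (hb : IsSelfAdjoint b) (hc : ‖c‖ ≤ 1)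
    {t : ℝ} (ht : 0 < t) : c * b + b * star c ≤ t⁻¹ • b ^ 2 + t • 1 := by
  have hsq : 0 ≤ t⁻¹ • b ^ 2 - (c * b + b * star c) + t • (c * star c) := by
    rw [← smul_inv_star_sub_smul_star_mul_self hb ht.ne']
    exact smul_nonneg (inv_nonneg.2 ht.le) (star_mul_self_nonneg _)
  calc c * b + b * star c ≤ t⁻¹ • b ^ 2 + t • (c * star c) := by
        rw [← sub_nonneg]; convert hsq using 1; abel
    _ ≤ t⁻¹ • b ^ 2 + t • 1 := by
        gcongr
        exact CStarAlgebra.mul_star_le_one_of_norm_le_one hc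

end CStarAlgebra

theorem stmt2_general (A B C : H →L[ℂ] H) (hB : 0 ≤ B) (hC : ‖C‖ ≤ 1)
    (h : C * B + B * star C = 2 • A) :
    ∀ t : ℝ, 0 < t → A ≤ (1 / (2 * t)) • B ^ 2 + (t / 2) • (1 : H →L[ℂ] H) := by
  intro t ht
  have hA : A = (2⁻¹ : ℝ) • (C * B + B * star C) := by
    rw [h, two_nsmul, ← two_smul ℝ, smul_smul]; norm_num
  calc A ≤ (2⁻¹ : ℝ) • (t⁻¹ • B ^ 2 + t • 1) := by
        rw [hA]
        exact smul_le_smul_of_nonneg_left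
          (mul_add_mul_star_le_of_norm_le_one (.of_nonneg hB) hC ht) (by norm_num)
    _ = (1 / (2 * t)) • B ^ 2 + (t / 2) • (1 : H →L[ℂ] H) := by
        rw [smul_add, smul_smul, smul_smul]
        congr 2 <;> ring

theorem stmt2 (A B C : H →L[ℂ] H) (hA : 0 ≤ A) (hB : 0 ≤ B) (hC : ‖C‖ ≤ 1)
    (h : C * B + B * star C = 2 • A) :
    ∀ t : ℝ, 0 < t → A ≤ (1 / (2 * t)) • B ^ 2 + (t / 2) • (1 : H →L[ℂ] H) :=
  stmt2_general A B C hB hC h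
end

section
/- Let c, ε be positive real numbers with ε < c. Then there exists a positive constant d such that λ²/(2t) + t/2 − (2tλ − t²)^{1/2} ≤ (d/2)(t − λ)² for all t, λ in the interval [c+ε, 2c]. -/
/-!
Put `B = √(2tλ - t²)`. Then `λ²/(2t) + t/2 - B = (λ² + t² - 2tB)/(2t)`, and multiplying the numerator
by its conjugate `λ² + t² + 2tB` gives `(λ² + t²)² - 4t²B² = (t - λ)² (λ² + 2tλ + 5t²)`, which is at most
`6 (t - λ)² (λ² + t²)`. Hence the left-hand side is at most `3 (t - λ)² / t`, and `d = 6 / c` works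
since `t ≥ c`.
-/

open Real

lemma sq_add_sq_sub_two_mul_sqrt_le {t lam : ℝ} (ht : 0 < t) :
    lam ^ 2 + t ^ 2 - 2 * t * √(2 * t * lam - t ^ 2) ≤ 6 * (t - lam) ^ 2 := by
  set B := √(2 * t * lam - t ^ 2)
  have hB_sq : 2 * t * lam - t ^ 2 ≤ B ^ 2 := sq_sqrt' (x := 2 * t * lam - t ^ 2) ▸ le_max_left _ _
  have hconj_pos : 0 < lam ^ 2 + t ^ 2 + 2 * t * B := by positivity
  have hconj : (lam ^ 2 + t ^ 2 - 2 * t * B) * (lam ^ 2 + t ^ 2 + 2 * t * B)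
      ≤ 6 * (t - lam) ^ 2 * (lam ^ 2 + t ^ 2 + 2 * t * B) := by
    have hprod : (lam ^ 2 + t ^ 2 - 2 * t * B) * (lam ^ 2 + t ^ 2 + 2 * t * B)
        ≤ (t - lam) ^ 2 * (lam ^ 2 + 2 * t * lam + 5 * t ^ 2) := by
      nlinarith [mul_le_mul_of_nonneg_left hB_sq (sq_nonneg (2 * t))]
    have hfactor : lam ^ 2 + 2 * t * lam + 5 * t ^ 2 ≤ 6 * (lam ^ 2 + t ^ 2 + 2 * t * B) := by
      nlinarith [sq_nonneg (t - lam), mul_nonneg ht.le (sqrt_nonneg (2 * t * lam - t ^ 2))]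
    nlinarith [mul_le_mul_of_nonneg_left hfactor (sq_nonneg (t - lam))]
  exact le_of_mul_le_mul_right hconj hconj_pos

lemma sq_div_add_half_sub_sqrt_le {t lam : ℝ} (ht : 0 < t) :
    lam ^ 2 / (2 * t) + t / 2 - √(2 * t * lam - t ^ 2) ≤ 3 / t * (t - lam) ^ 2 := by
  have hnum := sq_add_sq_sub_two_mul_sqrt_le (lam := lam) ht
  calc lam ^ 2 / (2 * t) + t / 2 - √(2 * t * lam - t ^ 2)
      = (lam ^ 2 + t ^ 2 - 2 * t * √(2 * t * lam - t ^ 2)) / (2 * t) := by field_simp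
    _ ≤ 6 * (t - lam) ^ 2 / (2 * t) := by gcongr
    _ = 3 / t * (t - lam) ^ 2 := by field_simp; ring

theorem stmt5_general (c ε : ℝ) (hc : 0 < c) (hε : 0 < ε) :
    ∃ d : ℝ, 0 < d ∧
      ∀ t lam : ℝ, c + ε ≤ t → t ≤ 2 * c → c + ε ≤ lam → lam ≤ 2 * c →
        lam ^ 2 / (2 * t) + t / 2 - Real.sqrt (2 * t * lam - t ^ 2) ≤
          d / 2 * (t - lam) ^ 2 := by
  refine ⟨6 / c, by positivity, fun t lam hct _ _ _ => ?_⟩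
  have hc_le_t : c ≤ t := by linarith
  calc lam ^ 2 / (2 * t) + t / 2 - √(2 * t * lam - t ^ 2)
      ≤ 3 / t * (t - lam) ^ 2 := sq_div_add_half_sub_sqrt_le (hc.trans_le hc_le_t)
    _ ≤ 3 / c * (t - lam) ^ 2 := by gcongr
    _ = 6 / c / 2 * (t - lam) ^ 2 := by ring

theorem stmt5 (c ε : ℝ) (hc : 0 < c) (hε : 0 < ε) (hεc : ε < c) :
    ∃ d : ℝ, 0 < d ∧
      ∀ t lam : ℝ, c + ε ≤ t → t ≤ 2 * c → c + ε ≤ lam → lam ≤ 2 * c →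
        lam ^ 2 / (2 * t) + t / 2 - Real.sqrt (2 * t * lam - t ^ 2) ≤
          d / 2 * (t - lam) ^ 2 :=
  stmt5_general c ε hc hε
end

section
/- Let A, B be bounded positive invertible operators on a complex Hilbert space with c+ε ≤ A ≤ 2c for some positive reals ε < c. If (2tA − t²)^{1/2} ≤ B ≤ A²/(2t) + t/2 for every t in the interval [c+ε, 2c], then A = B. -/
/-!
Write `m = c + ε`, `M = 2c`, `f_t x = √(2tx - t²)` and `g_t x = x²/(2t) + t/2`. For `x, t ∈ [m, M]`
both functions agree with `x` to second order at `x = t`: `0 ≤ x - f_t x ≤ (x - t)²/m` and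
`g_t x - f_t x ≤ 2(x - t)²/m`. So `P = B - f_t(A)` satisfies `0 ≤ P ≤ (2/m)(A - t)² ≤ r` with
`r = 2(M - m)²/m`, whence `‖P y‖² = ⟪P² y, y⟫ ≤ r ⟪P y, y⟫ ≤ (2r/m) ‖(A - t) y‖²`. With the
analogous bound for `A - f_t(A)` this gives `‖(B - A) y‖ ≤ K ‖(A - t) y‖` for every `t ∈ [m, M]`,
with `K` independent of `t`. Splitting `y = ∑ ψᵢ(A) y` along a partition of unity by tent functions
of width `δ = (M - m)/(n + 1)` centred at points `tᵢ`, the triangle and Cauchy–Schwarz inequalities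
yield `‖(B - A) y‖² ≤ K² (n + 2) δ² ‖y‖²`, which tends to `0`.
-/

open scoped InnerProductSpace

variable {H : Type*} [NormedAddCommGroup H] [InnerProductSpace ℂ H] [CompleteSpace H]

open Finset

section Scalar

variable {m d t x : ℝ}

lemma sqrt_two_mul_mul_sub_sq_le (hx : 0 ≤ x) : √(2 * t * x - t ^ 2) ≤ x :=
  Real.sqrt_le_iff.mpr ⟨hx, by nlinarith [sq_nonneg (x - t)]⟩

lemma sub_sqrt_two_mul_mul_sub_sq_le (hx : 0 < x) :
    x - √(2 * t * x - t ^ 2) ≤ (x - t) ^ 2 / x := by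
  set s := √(2 * t * x - t ^ 2)
  have hsx : s ≤ x := sqrt_two_mul_mul_sub_sq_le hx.le
  have hs2 : 2 * t * x - t ^ 2 ≤ s ^ 2 := by
    rcases le_total 0 (2 * t * x - t ^ 2) with h | h
    · rw [Real.sq_sqrt h]
    · exact h.trans (sq_nonneg s)
  rw [le_div_iff₀ hx]
  nlinarith [Real.sqrt_nonneg (2 * t * x - t ^ 2)]

lemma sub_sqrt_two_mul_mul_sub_sq_sq_le (hm : 0 < m) (hmx : m ≤ x) (hxt : |x - t| ≤ d) :
    (x - √(2 * t * x - t ^ 2)) ^ 2 ≤ (d / m * (x - t)) ^ 2 := by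
  have hx : 0 < x := hm.trans_le hmx
  rw [mul_pow, ← sq_abs (x - t), ← mul_pow]
  refine pow_le_pow_left₀ (sub_nonneg.mpr (sqrt_two_mul_mul_sub_sq_le hx.le)) ?_ 2
  calc x - √(2 * t * x - t ^ 2) ≤ (x - t) ^ 2 / x := sub_sqrt_two_mul_mul_sub_sq_le hx
    _ ≤ |x - t| * |x - t| / m := by
      rw [abs_mul_abs_self, ← sq]; gcongr
    _ ≤ d / m * |x - t| := by
      rw [div_mul_eq_mul_div, mul_comm d]; gcongr

lemma quadratic_sub_sqrt_two_mul_mul_sub_sq_le (hm : 0 < m) (hmx : m ≤ x) (hmt : m ≤ t) :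
    1 / (2 * t) * x ^ 2 + t / 2 - √(2 * t * x - t ^ 2) ≤ 2 / m * (x - t) ^ 2 := by
  have hx : 0 < x := hm.trans_le hmx
  have ht : 0 < t := hm.trans_le hmt
  have hquad : 1 / (2 * t) * x ^ 2 + t / 2 - x = (x - t) ^ 2 / (2 * t) := by
    field_simp
    ring
  have h1 : (x - t) ^ 2 / (2 * t) ≤ (x - t) ^ 2 / m := by gcongr; linarith
  have h2 : (x - t) ^ 2 / x ≤ (x - t) ^ 2 / m := by gcongr
  have h3 := sub_sqrt_two_mul_mul_sub_sq_le (t := t) hx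
  have h4 : (x - t) ^ 2 / m + (x - t) ^ 2 / m = 2 / m * (x - t) ^ 2 := by ring
  linarith

end Scalar

noncomputable def ramp (u : ℝ) : ℝ := max 0 (min 1 u)

noncomputable def tent (u : ℝ) : ℝ := max 0 (1 - |u|)

lemma continuous_tent : Continuous tent := by unfold tent; fun_prop

lemma mul_tent_sq_le (u : ℝ) : (u * tent u) ^ 2 ≤ tent u := by
  unfold tent
  rcases le_total |u| 1 with h | h
  · rw [max_eq_right (by linarith), mul_pow, ← sq_abs]
    have hu : |u| ^ 2 ≤ 1 := by nlinarith [abs_nonneg u]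
    nlinarith [mul_le_mul_of_nonneg_right hu (sq_nonneg (1 - |u|)), abs_nonneg u]
  · rw [max_eq_left (by linarith)]
    simp

lemma tent_eq_ramp_sub_ramp (u : ℝ) : tent u = ramp (u + 1) - ramp u := by
  unfold tent ramp
  simp only [max_def, min_def, abs_eq_max_neg]
  split_ifs <;> linarith

lemma sum_range_tent_sub_natCast {n : ℕ} {u : ℝ} (h0 : 0 ≤ u) (hn : u ≤ n) :
    ∑ i ∈ range (n + 1), tent (u - i) = 1 := by
  have key := sum_range_sub' (fun i : ℕ ↦ ramp (u - i + 1)) (n + 1)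
  simp only [Nat.cast_add, Nat.cast_one, sub_add_eq_sub_sub, sub_add_cancel,
    ← tent_eq_ramp_sub_ramp, Nat.cast_zero, sub_zero] at key
  rw [key, ramp, ramp, min_eq_left (by linarith), max_eq_right zero_le_one,
    min_eq_right (by linarith), max_eq_left (by linarith), sub_zero]

section CStarAlgebra

variable {𝒜 : Type*} [CStarAlgebra 𝒜]

lemma cfc_sub_const_id (a : 𝒜) (t : ℝ) (ha : IsSelfAdjoint a := by cfc_tac) :
    cfc (fun x : ℝ ↦ x - t) a = a - algebraMap ℝ 𝒜 t := by
  rw [cfc_sub _ _, cfc_id' ℝ a, cfc_const t a]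

lemma cfc_two_mul_mul_sub_sq (a : 𝒜) (t : ℝ) (ha : IsSelfAdjoint a := by cfc_tac) :
    cfc (fun x ↦ 2 * t * x - t ^ 2) a = (2 * t) • a - t ^ 2 • (1 : 𝒜) := by
  rw [cfc_sub _ _ a, cfc_const_mul_id _ a, cfc_const _ a, Algebra.algebraMap_eq_smul_one]

lemma cfc_quadratic (a : 𝒜) (t : ℝ) (ha : IsSelfAdjoint a := by cfc_tac) :
    cfc (fun x ↦ 1 / (2 * t) * x ^ 2 + t / 2) a = (1 / (2 * t)) • a ^ 2 + (t / 2) • (1 : 𝒜) := by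
  rw [cfc_add_const _ _ a, cfc_const_mul _ _ a, cfc_pow_id a 2, Algebra.algebraMap_eq_smul_one]

variable [PartialOrder 𝒜] [StarOrderedRing 𝒜]

lemma sq_le_smul_of_nonneg_of_le_algebraMap {a : 𝒜} {r : ℝ} (ha : 0 ≤ a)
    (har : a ≤ algebraMap ℝ 𝒜 r) : a ^ 2 ≤ r • a := by
  have hspec := (le_algebraMap_iff_spectrum_le (IsSelfAdjoint.of_nonneg ha)).mp har
  rw [← cfc_pow_id (R := ℝ) a 2, ← cfc_const_mul_id r a]
  exact cfc_mono fun x hx ↦ by nlinarith [spectrum_nonneg_of_nonneg ha hx, hspec x hx]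

lemma CFC.sqrt_cfc (f : ℝ → ℝ) (a : 𝒜) (hf : ∀ x ∈ spectrum ℝ a, 0 ≤ f x)
    (hfc : ContinuousOn f (spectrum ℝ a) := by cfc_cont_tac) :
    CFC.sqrt (cfc f a) = cfc (fun x ↦ √(f x)) a := by
  refine CFC.sqrt_unique ?_ (cfc_nonneg fun x _ ↦ Real.sqrt_nonneg (f x))
  rw [← cfc_mul _ _ a hfc.sqrt hfc.sqrt]
  exact cfc_congr fun x hx ↦ Real.mul_self_sqrt (hf x hx)

end CStarAlgebra

namespace ContinuousLinearMap

section RCLike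

variable {𝕜 E : Type*} [RCLike 𝕜] [NormedAddCommGroup E] [InnerProductSpace 𝕜 E]

lemma re_inner_le_re_inner_of_le {T S : E →L[𝕜] E} (h : T ≤ S) (y : E) :
    RCLike.re ⟪T y, y⟫_𝕜 ≤ RCLike.re ⟪S y, y⟫_𝕜 := by
  have := (le_def T S |>.mp h).re_inner_nonneg_left y
  rwa [sub_apply, inner_sub_left, map_sub, sub_nonneg] at this

lemma norm_apply_sq_eq_re_inner_sq [CompleteSpace E] {T : E →L[𝕜] E} (hT : IsSelfAdjoint T)
    (y : E) : ‖T y‖ ^ 2 = RCLike.re ⟪(T ^ 2) y, y⟫_𝕜 := by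
  rw [apply_norm_sq_eq_inner_adjoint_left, ← star_eq_adjoint, hT.star_eq, sq]
  rfl

end RCLike

lemma re_inner_smul_apply {E : Type*} [NormedAddCommGroup E] [InnerProductSpace ℂ E] (r : ℝ)
    (T : E →L[ℂ] E) (y : E) :
    RCLike.re ⟪(r • T) y, y⟫_ℂ = r * RCLike.re ⟪T y, y⟫_ℂ := by
  rw [smul_apply, RCLike.real_smul_eq_coe_smul (K := ℂ), inner_smul_real_left, RCLike.smul_re]

lemma norm_cfc_apply_sq {A : H →L[ℂ] H} (hA : IsSelfAdjoint A) (f : ℝ → ℝ)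
    (hf : ContinuousOn f (spectrum ℝ A)) (y : H) :
    ‖cfc f A y‖ ^ 2 = RCLike.re ⟪cfc (fun x ↦ f x ^ 2) A y, y⟫_ℂ := by
  rw [norm_apply_sq_eq_re_inner_sq (cfc_predicate f A), cfc_pow f 2 A]

lemma norm_cfc_apply_le_norm_cfc_apply {A : H →L[ℂ] H} (hA : IsSelfAdjoint A) {f g : ℝ → ℝ}
    (hf : ContinuousOn f (spectrum ℝ A)) (hg : ContinuousOn g (spectrum ℝ A))
    (hfg : ∀ x ∈ spectrum ℝ A, f x ^ 2 ≤ g x ^ 2) (y : H) :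
    ‖cfc f A y‖ ≤ ‖cfc g A y‖ := by
  refine (pow_le_pow_iff_left₀ (norm_nonneg _) (norm_nonneg _) two_ne_zero).mp ?_
  rw [norm_cfc_apply_sq hA f hf, norm_cfc_apply_sq hA g hg]
  exact re_inner_le_re_inner_of_le (cfc_mono hfg (hf.pow 2) (hg.pow 2)) y

lemma norm_apply_sq_le_mul_re_inner {P Q : H →L[ℂ] H} {r : ℝ} (hr : 0 ≤ r) (hP : 0 ≤ P)
    (hPQ : P ≤ Q) (hQ : Q ≤ algebraMap ℝ _ r) (y : H) :
    ‖P y‖ ^ 2 ≤ r * RCLike.re ⟪Q y, y⟫_ℂ :=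
  calc ‖P y‖ ^ 2 = RCLike.re ⟪(P ^ 2) y, y⟫_ℂ := norm_apply_sq_eq_re_inner_sq (.of_nonneg hP) y
    _ ≤ r * RCLike.re ⟪P y, y⟫_ℂ := by
      rw [← re_inner_smul_apply]
      exact re_inner_le_re_inner_of_le (sq_le_smul_of_nonneg_of_le_algebraMap hP (hPQ.trans hQ)) y
    _ ≤ r * RCLike.re ⟪Q y, y⟫_ℂ := mul_le_mul_of_nonneg_left (re_inner_le_re_inner_of_le hPQ y) hr

end ContinuousLinearMap

open ContinuousLinearMap in
lemma norm_sub_apply_le_of_sqrt_le_of_le_quadratic {A B : H →L[ℂ] H} (hA : IsSelfAdjoint A)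
    {m M t : ℝ} (hm : 0 < m) (hσ : spectrum ℝ A ⊆ Set.Icc m M) (ht : t ∈ Set.Icc m M)
    (hlow : cfc (fun x ↦ √(2 * t * x - t ^ 2)) A ≤ B)
    (hup : B ≤ cfc (fun x ↦ 1 / (2 * t) * x ^ 2 + t / 2) A) (y : H) :
    ‖(B - A) y‖ ≤ 3 * (M - m) / m * ‖(A - algebraMap ℝ _ t) y‖ := by
  set S := cfc (fun x ↦ √(2 * t * x - t ^ 2)) A
  set T := A - algebraMap ℝ (H →L[ℂ] H) t
  have hT : cfc (fun x ↦ x - t) A = T := cfc_sub_const_id A t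
  have hmM : 0 ≤ M - m := by linarith [ht.1, ht.2]
  have hdist : ∀ x ∈ spectrum ℝ A, |x - t| ≤ M - m := fun x hx ↦
    abs_sub_le_iff.mpr ⟨by linarith [(hσ hx).2, ht.1], by linarith [(hσ hx).1, ht.2]⟩
  have hBS : ‖(B - S) y‖ ≤ 2 * (M - m) / m * ‖T y‖ := by
    have hQ : B - S ≤ (2 / m) • cfc (fun x ↦ (x - t) ^ 2) A := by
      rw [← cfc_const_mul (2 / m) (fun x ↦ (x - t) ^ 2) A]
      calc B - S ≤ cfc (fun x ↦ 1 / (2 * t) * x ^ 2 + t / 2) A - S := sub_le_sub_right hup S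
        _ = cfc (fun x ↦ 1 / (2 * t) * x ^ 2 + t / 2 - √(2 * t * x - t ^ 2)) A :=
          (cfc_sub ..).symm
        _ ≤ _ := cfc_mono fun x hx ↦ quadratic_sub_sqrt_two_mul_mul_sub_sq_le hm (hσ hx).1 ht.1
    have hQr : (2 / m) • cfc (fun x ↦ (x - t) ^ 2) A ≤ algebraMap ℝ _ (2 / m * (M - m) ^ 2) := by
      rw [← cfc_const_mul (2 / m) (fun x ↦ (x - t) ^ 2) A]
      refine cfc_le_algebraMap _ _ _ fun x hx ↦ ?_
      have := pow_le_pow_left₀ (abs_nonneg _) (hdist x hx) 2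
      rw [sq_abs] at this
      exact mul_le_mul_of_nonneg_left this (by positivity)
    have := norm_apply_sq_le_mul_re_inner (by positivity) (sub_nonneg.mpr hlow) hQ hQr y
    rw [re_inner_smul_apply, ← norm_cfc_apply_sq hA _ (by fun_prop), hT] at this
    refine (pow_le_pow_iff_left₀ (norm_nonneg _) (by positivity) two_ne_zero).mp ?_
    exact this.trans_eq (by ring)
  have hAS : ‖(A - S) y‖ ≤ (M - m) / m * ‖T y‖ := by
    have := norm_cfc_apply_le_norm_cfc_apply hA (f := fun x ↦ x - √(2 * t * x - t ^ 2))
      (g := fun x ↦ (M - m) / m * (x - t)) (by fun_prop) (by fun_prop)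
      (fun x hx ↦ sub_sqrt_two_mul_mul_sub_sq_sq_le hm (hσ hx).1 (hdist x hx)) y
    rwa [cfc_sub .., cfc_id' ℝ A, cfc_const_mul .., hT, smul_apply, norm_smul,
      Real.norm_of_nonneg (by positivity)] at this
  calc ‖(B - A) y‖ = ‖(B - S) y - (A - S) y‖ := by rw [← sub_apply, sub_sub_sub_cancel_right]
    _ ≤ ‖(B - S) y‖ + ‖(A - S) y‖ := norm_sub_le _ _
    _ ≤ 2 * (M - m) / m * ‖T y‖ + (M - m) / m * ‖T y‖ := add_le_add hBS hAS
    _ = 3 * (M - m) / m * ‖T y‖ := by ring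

open ContinuousLinearMap in
lemma norm_apply_sq_le_of_partition {A D : H →L[ℂ] H} (hA : IsSelfAdjoint A) {ι : Type*}
    (s : Finset ι) (ψ : ι → ℝ → ℝ) (τ : ι → ℝ) {K δ : ℝ} (hψ : ∀ i, Continuous (ψ i))
    (hsum : ∀ v ∈ spectrum ℝ A, ∑ i ∈ s, ψ i v = 1)
    (hloc : ∀ i v, ((v - τ i) * ψ i v) ^ 2 ≤ δ ^ 2 * ψ i v)
    (hD : ∀ i ∈ s, ∀ y, ‖D y‖ ≤ K * ‖(A - algebraMap ℝ _ (τ i)) y‖) (x : H) :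
    ‖D x‖ ^ 2 ≤ K ^ 2 * #s * δ ^ 2 * ‖x‖ ^ 2 := by
  have hone : ∑ i ∈ s, cfc (ψ i) A = 1 := by
    rw [← cfc_sum _ _ _ fun i _ ↦ (hψ i).continuousOn, ← cfc_one ℝ A]
    exact cfc_congr fun v hv ↦ by simpa using hsum v hv
  have hx : ∑ i ∈ s, cfc (ψ i) A x = x := by
    rw [← _root_.sum_apply, hone, one_apply_eq_self]
  set a : ι → ℝ := fun i ↦ ‖cfc (fun v ↦ (v - τ i) * ψ i v) A x‖
  have hDx : ‖D x‖ ≤ K * ∑ i ∈ s, a i :=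
    calc ‖D x‖ = ‖∑ i ∈ s, D (cfc (ψ i) A x)‖ := by rw [← map_sum, hx]
      _ ≤ ∑ i ∈ s, ‖D (cfc (ψ i) A x)‖ := norm_sum_le _ _
      _ ≤ ∑ i ∈ s, K * a i := sum_le_sum fun i hi ↦ by
          show _ ≤ K * ‖cfc (fun v ↦ (v - τ i) * ψ i v) A x‖
          rw [cfc_mul (fun v ↦ v - τ i) (ψ i) A (by fun_prop) (hψ i).continuousOn,
            cfc_sub_const_id A (τ i)]
          exact hD i hi _
      _ = K * ∑ i ∈ s, a i := (mul_sum ..).symm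
  have ha : ∀ i, a i ^ 2 ≤ δ ^ 2 * RCLike.re ⟪cfc (ψ i) A x, x⟫_ℂ := fun i ↦ by
    have := (hψ i).continuousOn (s := spectrum ℝ A)
    rw [norm_cfc_apply_sq hA _ (by fun_prop), ← re_inner_smul_apply,
      ← cfc_const_mul (δ ^ 2) (ψ i) A]
    exact re_inner_le_re_inner_of_le (cfc_mono fun v _ ↦ hloc i v) x
  have hs : ∑ i ∈ s, RCLike.re ⟪cfc (ψ i) A x, x⟫_ℂ = ‖x‖ ^ 2 := by
    rw [← map_sum, ← sum_inner, hx, inner_self_eq_norm_sq]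
  calc ‖D x‖ ^ 2 ≤ (K * ∑ i ∈ s, a i) ^ 2 := pow_le_pow_left₀ (norm_nonneg _) hDx 2
    _ = K ^ 2 * (∑ i ∈ s, a i) ^ 2 := mul_pow ..
    _ ≤ K ^ 2 * (#s * ∑ i ∈ s, a i ^ 2) := by gcongr; exact sq_sum_le_card_mul_sum_sq
    _ ≤ K ^ 2 * (#s * ∑ i ∈ s, δ ^ 2 * RCLike.re ⟪cfc (ψ i) A x, x⟫_ℂ) := by
      gcongr with i; exact ha i
    _ = K ^ 2 * #s * δ ^ 2 * ‖x‖ ^ 2 := by rw [← mul_sum, hs]; ring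

lemma eq_zero_of_forall_norm_apply_le {A D : H →L[ℂ] H} (hA : IsSelfAdjoint A) {m M K : ℝ}
    (hmM : m < M) (hσ : spectrum ℝ A ⊆ Set.Icc m M)
    (hD : ∀ t ∈ Set.Icc m M, ∀ y, ‖D y‖ ≤ K * ‖(A - algebraMap ℝ _ t) y‖) : D = 0 := by
  ext x
  suffices ‖D x‖ ^ 2 ≤ 0 by simpa using this
  have hbound : ∀ n : ℕ, ‖D x‖ ^ 2 ≤ 2 * K ^ 2 * (M - m) ^ 2 * ‖x‖ ^ 2 * (1 / (n + 1)) := by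
    intro n
    set δ := (M - m) / (n + 1)
    have hδ : 0 < δ := div_pos (sub_pos.mpr hmM) n.cast_add_one_pos
    have hnδ : (n + 1) * δ = M - m := mul_div_cancel₀ _ n.cast_add_one_ne_zero
    have hpart := norm_apply_sq_le_of_partition hA (range (n + 2))
      (fun i v ↦ tent ((v - m) / δ - i)) (fun i ↦ m + i * δ) (K := K)
      (fun i ↦ continuous_tent.comp (by fun_prop))
      (fun v hv ↦ by
        refine sum_range_tent_sub_natCast (div_nonneg ?_ hδ.le) ?_
        · linarith [(hσ hv).1]
        · rw [div_le_iff₀ hδ]; push_cast; linarith [(hσ hv).2])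
      (fun i v ↦ by
        have hv : v - (m + i * δ) = δ * ((v - m) / δ - i) := by field_simp; ring
        rw [hv, mul_assoc, mul_pow]
        exact mul_le_mul_of_nonneg_left (mul_tent_sq_le _) (sq_nonneg δ))
      (fun i hi y ↦ by
        refine hD _ ⟨by nlinarith [i.cast_nonneg (α := ℝ)], ?_⟩ y
        have : (i : ℝ) ≤ n + 1 := by exact_mod_cast Nat.lt_succ_iff.mp (mem_range.mp hi)
        nlinarith)
      x
    have hn : (0 : ℝ) < n + 1 := n.cast_add_one_pos
    calc ‖D x‖ ^ 2 ≤ K ^ 2 * #(range (n + 2)) * δ ^ 2 * ‖x‖ ^ 2 := hpart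
      _ = K ^ 2 * (M - m) ^ 2 * ‖x‖ ^ 2 * ((n + 2) / (n + 1) ^ 2) := by
        rw [card_range, div_pow]; push_cast; ring
      _ ≤ K ^ 2 * (M - m) ^ 2 * ‖x‖ ^ 2 * (2 * (n + 1) / (n + 1) ^ 2) := by gcongr; linarith
      _ = 2 * K ^ 2 * (M - m) ^ 2 * ‖x‖ ^ 2 * (1 / (n + 1)) := by field_simp
  simpa using ge_of_tendsto' (tendsto_const_nhds.mul tendsto_one_div_add_atTop_nhds_zero_nat) hbound

set_option synthInstance.maxHeartbeats 1000000 in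
theorem stmt9_general (A B : H →L[ℂ] H) (hA : 0 ≤ A) (c ε : ℝ) (hε : 0 < ε) (hεc : ε < c)
    (hA1 : (c + ε) • (1 : H →L[ℂ] H) ≤ A) (hA2 : A ≤ (2 * c) • (1 : H →L[ℂ] H))
    (h : ∀ t : ℝ, c + ε ≤ t → t ≤ 2 * c →
      CFC.sqrt ((2 * t) • A - t ^ 2 • (1 : H →L[ℂ] H)) ≤ B ∧
        B ≤ (1 / (2 * t)) • A ^ 2 + (t / 2) • (1 : H →L[ℂ] H)) :
    A = B := by
  have hAsa : IsSelfAdjoint A := .of_nonneg hA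
  rw [← Algebra.algebraMap_eq_smul_one] at hA1 hA2
  have hσ : spectrum ℝ A ⊆ Set.Icc (c + ε) (2 * c) := fun x hx ↦
    ⟨(algebraMap_le_iff_le_spectrum hAsa).mp hA1 x hx,
      (le_algebraMap_iff_spectrum_le hAsa).mp hA2 x hx⟩
  have hcfc : ∀ t ∈ Set.Icc (c + ε) (2 * c),
      cfc (fun x ↦ √(2 * t * x - t ^ 2)) A ≤ B ∧
        B ≤ cfc (fun x ↦ 1 / (2 * t) * x ^ 2 + t / 2) A := fun t ht ↦ by
    have hrad : ∀ x ∈ spectrum ℝ A, 0 ≤ 2 * t * x - t ^ 2 := fun x hx ↦ by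
      nlinarith [ht.1, ht.2, (hσ hx).1]
    rw [← CFC.sqrt_cfc _ A hrad, cfc_two_mul_mul_sub_sq A t, cfc_quadratic A t]
    exact h t ht.1 ht.2
  refine (sub_eq_zero.mp (eq_zero_of_forall_norm_apply_le hAsa (by linarith) hσ fun t ht ↦
    norm_sub_apply_le_of_sqrt_le_of_le_quadratic hAsa (by linarith) hσ ht (hcfc t ht).1
      (hcfc t ht).2)).symm

set_option synthInstance.maxHeartbeats 1000000 in
theorem stmt9 (A B : H →L[ℂ] H) (hA : 0 ≤ A) (hB : 0 ≤ B)
    (hAu : IsUnit A) (hBu : IsUnit B) (c ε : ℝ) (hε : 0 < ε) (hεc : ε < c)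
    (hA1 : (c + ε) • (1 : H →L[ℂ] H) ≤ A) (hA2 : A ≤ (2 * c) • (1 : H →L[ℂ] H))
    (h : ∀ t : ℝ, c + ε ≤ t → t ≤ 2 * c →
      CFC.sqrt ((2 * t) • A - t ^ 2 • (1 : H →L[ℂ] H)) ≤ B ∧
        B ≤ (1 / (2 * t)) • A ^ 2 + (t / 2) • (1 : H →L[ℂ] H)) :
    A = B :=
  stmt9_general A B hA c ε hε hεc hA1 hA2 h
end

section
/- There exist 2×2 positive semidefinite complex matrices A, B, C such that A² ⊴ B² and B² ⊴ C² hold, but A² ⊴ C² fails; explicitly one may take A = [[√2, 1/2],[1/2, √2]], B = (1/3)[[4, √2],[√2, 5]], and C = |Y| with Y = (1/3)[[4, 2√2],[0, 5]]. -/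
open Matrix
open scoped ComplexOrder

/-- The relation `X² ⊴ Y²` for positive matrices: `⟨X ξ, ξ⟩ ≤ ⟨Y² ξ, ξ⟩^{1/2}` for
all unit vectors `ξ ∈ ℂ²` (here `X` plays the role of the square root of `X²`). -/
def relSq (X Y : Matrix (Fin 2) (Fin 2) ℂ) : Prop :=
  ∀ ξ : EuclideanSpace ℂ (Fin 2), ‖ξ‖ = 1 →
    (star (ξ : Fin 2 → ℂ) ⬝ᵥ X.mulVec ξ).re ≤
      Real.sqrt ((star (ξ : Fin 2 → ℂ) ⬝ᵥ (Y * Y).mulVec ξ).re)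

noncomputable def matA : Matrix (Fin 2) (Fin 2) ℂ :=
  !![(Real.sqrt 2 : ℂ), 1/2; 1/2, (Real.sqrt 2 : ℂ)]

noncomputable def matB : Matrix (Fin 2) (Fin 2) ℂ :=
  (3 : ℂ)⁻¹ • !![4, (Real.sqrt 2 : ℂ); (Real.sqrt 2 : ℂ), 5]

noncomputable def matY : Matrix (Fin 2) (Fin 2) ℂ :=
  (3 : ℂ)⁻¹ • !![4, (2 * Real.sqrt 2 : ℂ); 0, 5]

noncomputable def matC : Matrix (Fin 2) (Fin 2) ℂ :=
  (Matrix.posSemidef_conjTranspose_mul_self matY).1.eigenvectorUnitary.1 *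
    diagonal ((RCLike.ofReal : ℝ → ℂ) ∘ Real.sqrt ∘
      (Matrix.posSemidef_conjTranspose_mul_self matY).1.eigenvalues) *
    (star (Matrix.posSemidef_conjTranspose_mul_self matY).1.eigenvectorUnitary : Matrix (Fin 2) (Fin 2) ℂ)

/-!
The matrices `A`, `B`, `B²` and `C² = |Y|² = Y* Y` are real symmetric `2 × 2` matrices. For such
a matrix and a unit vector `ξ`, the quadratic form depends only on `a = |ξ₀|²`, `b = |ξ₁|²` and
`s = Re (ξ̄₀ ξ₁)`, which satisfy `a + b = 1` and `s² ≤ a b`. On this region `A² ⊴ B²` reduces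
to `s² ≤ b`, and `B² ⊴ C²` to `b² + 8 s² + 4√2 b s ≤ 9 b`. The vector
`ξ = (2√2, 1) / 3` breaks `A² ⊴ C²`: there `⟨A ξ, ξ⟩ = 11√2/9 > 5/3 = ⟨C² ξ, ξ⟩^{1/2}`.
-/

open scoped MatrixOrder

theorem Matrix.PosSemidef.cfcSqrt_eq {n 𝕜 : Type*} [Fintype n] [DecidableEq n] [RCLike 𝕜]
    {M : Matrix n n 𝕜} (hM : M.PosSemidef) :
    CFC.sqrt M = (hM.1.eigenvectorUnitary : Matrix n n 𝕜) *
      diagonal ((RCLike.ofReal : ℝ → 𝕜) ∘ Real.sqrt ∘ hM.1.eigenvalues) *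
      star (hM.1.eigenvectorUnitary : Matrix n n 𝕜) := by
  rw [CFC.sqrt_eq_cfc, cfc_nnreal_eq_real _ _ hM.nonneg, hM.1.cfc_eq, IsHermitian.cfc,
    Unitary.conjStarAlgAut_apply]
  simp [Function.comp_def, max_eq_left (hM.eigenvalues_nonneg _)]

theorem matC_eq_abs : matC = CFC.abs matY :=
  ((posSemidef_conjTranspose_mul_self matY).cfcSqrt_eq).symm

def realSymm (p q w : ℝ) : Matrix (Fin 2) (Fin 2) ℂ := !![(p : ℂ), q; q, w]

theorem realSymm_mul_self (p q w : ℝ) :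
    realSymm p q w * realSymm p q w = realSymm (p ^ 2 + q ^ 2) (q * (p + w)) (q ^ 2 + w ^ 2) := by
  ext i j; fin_cases i <;> fin_cases j <;> simp [realSymm] <;> ring

theorem conjTranspose_mul_self_realUpper (a b d : ℝ) :
    (!![(a : ℂ), b; 0, d])ᴴ * !![(a : ℂ), b; 0, d] = realSymm (a ^ 2) (a * b) (b ^ 2 + d ^ 2) := by
  ext i j; fin_cases i <;> fin_cases j <;> simp [realSymm, mul_apply, Fin.sum_univ_two] <;> ring

theorem isHermitian_realSymm (p q w : ℝ) : (realSymm p q w).IsHermitian := by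
  ext i j; fin_cases i <;> fin_cases j <;> simp [realSymm]

theorem re_star_dotProduct_realSymm_mulVec (p q w : ℝ) (v : Fin 2 → ℂ) :
    (star v ⬝ᵥ realSymm p q w *ᵥ v).re =
      p * Complex.normSq (v 0) + w * Complex.normSq (v 1) + 2 * q * (star (v 0) * v 1).re := by
  simp [realSymm, dotProduct, Fin.sum_univ_two, Complex.normSq_apply]
  ring

theorem sq_re_star_mul_le (x y : ℂ) :
    (star x * y).re ^ 2 ≤ Complex.normSq x * Complex.normSq y := by
  simpa [sq, Complex.normSq_mul] using Complex.re_sq_le_normSq (star x * y)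

theorem posSemidef_realSymm {p q w : ℝ} (hp : 0 ≤ p) (hw : 0 ≤ w) (hq : q ^ 2 ≤ p * w) :
    (realSymm p q w).PosSemidef := by
  refine .of_dotProduct_mulVec_nonneg (isHermitian_realSymm p q w) fun v => ?_
  refine RCLike.nonneg_iff.mpr ⟨?_, (isHermitian_realSymm p q w).im_star_dotProduct_mulVec_self v⟩
  rw [RCLike.re_to_complex, re_star_dotProduct_realSymm_mulVec]
  set a := Complex.normSq (v 0)
  set b := Complex.normSq (v 1)
  set s := (star (v 0) * v 1).re
  have hqs : (2 * q * s) ^ 2 ≤ (p * a + w * b) ^ 2 := by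
    have := mul_le_mul hq (sq_re_star_mul_le (v 0) (v 1)) (sq_nonneg s) (mul_nonneg hp hw)
    nlinarith [sq_nonneg (p * a - w * b)]
  have hpawb : 0 ≤ p * a + w * b :=
    add_nonneg (mul_nonneg hp (Complex.normSq_nonneg _)) (mul_nonneg hw (Complex.normSq_nonneg _))
  linarith [(abs_le_of_sq_le_sq' hqs hpawb).1]

theorem normSq_add_normSq_eq_one {ξ : EuclideanSpace ℂ (Fin 2)} (hξ : ‖ξ‖ = 1) :
    Complex.normSq (ξ 0) + Complex.normSq (ξ 1) = 1 := by
  simpa [EuclideanSpace.norm_sq_eq, Fin.sum_univ_two, Complex.normSq_eq_norm_sq, hξ] using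
    (EuclideanSpace.norm_sq_eq ξ).symm

theorem relSq_of_realSymm {X Y : Matrix (Fin 2) (Fin 2) ℂ} {p q w p' q' w' : ℝ}
    (hX : X = realSymm p q w) (hY : Y * Y = realSymm p' q' w')
    (h : ∀ a b s : ℝ, 0 ≤ a → 0 ≤ b → a + b = 1 → s ^ 2 ≤ a * b →
      (p * a + w * b + 2 * q * s) ^ 2 ≤ p' * a + w' * b + 2 * q' * s) :
    relSq X Y := by
  intro ξ hξ
  rw [hX, hY, re_star_dotProduct_realSymm_mulVec, re_star_dotProduct_realSymm_mulVec]
  exact Real.le_sqrt_of_sq_le <| h _ _ _ (Complex.normSq_nonneg _) (Complex.normSq_nonneg _)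
    (normSq_add_normSq_eq_one hξ) (sq_re_star_mul_le _ _)

theorem relSq.le_sqrt_of_realSymm {X Y : Matrix (Fin 2) (Fin 2) ℂ} {p q w p' q' w' : ℝ}
    (hXY : relSq X Y) (hX : X = realSymm p q w) (hY : Y * Y = realSymm p' q' w')
    {x y : ℝ} (hxy : x ^ 2 + y ^ 2 = 1) :
    p * x ^ 2 + w * y ^ 2 + 2 * q * (x * y) ≤ √(p' * x ^ 2 + w' * y ^ 2 + 2 * q' * (x * y)) := by
  have hξ : ‖!₂[(x : ℂ), y]‖ = 1 := by
    simp [EuclideanSpace.norm_eq, Fin.sum_univ_two, hxy]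
  have := hXY _ hξ
  rw [hX, hY, re_star_dotProduct_realSymm_mulVec, re_star_dotProduct_realSymm_mulVec] at this
  simpa [Complex.normSq_ofReal, sq] using this

theorem sq_sqrt_two : √2 ^ 2 = 2 := Real.sq_sqrt zero_le_two

theorem matA_eq : matA = realSymm √2 (1 / 2) √2 := by
  ext i j; fin_cases i <;> fin_cases j <;> simp [matA, realSymm]

theorem matB_eq : matB = realSymm (4 / 3) (√2 / 3) (5 / 3) := by
  ext i j; fin_cases i <;> fin_cases j <;> simp [matB, realSymm] <;> ring

theorem matB_mul_self : matB * matB = realSymm 2 √2 3 := by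
  rw [matB_eq, realSymm_mul_self]
  congr 1 <;> linarith [sq_sqrt_two]

theorem matY_eq : matY = !![((4 / 3 : ℝ) : ℂ), ((2 * √2 / 3 : ℝ) : ℂ); 0, ((5 / 3 : ℝ) : ℂ)] := by
  ext i j; fin_cases i <;> fin_cases j <;> simp [matY] <;> ring

theorem matC_mul_self : matC * matC = realSymm (16 / 9) (8 * √2 / 9) (11 / 3) := by
  rw [matC_eq_abs, CFC.abs_mul_abs, star_eq_conjTranspose, matY_eq,
    conjTranspose_mul_self_realUpper]
  congr 1 <;> linarith [sq_sqrt_two]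

theorem relSq_matA_matB : relSq matA matB := by
  refine relSq_of_realSymm matA_eq matB_mul_self fun a b s ha hb hab hs => ?_
  have hsb : s ^ 2 ≤ b := by nlinarith
  rw [show √2 * a + √2 * b + 2 * (1 / 2) * s = √2 + s by linear_combination √2 * hab]
  nlinarith [sq_sqrt_two]

theorem relSq_matB_matC : relSq matB matC := by
  refine relSq_of_realSymm matB_eq matC_mul_self fun a b s ha hb hab hs => ?_
  have hs' : 4 * √2 * s ≤ 1 + 7 * b := by
    refine Real.le_sqrt_of_sq_le ?_ |>.trans_eq (Real.sqrt_sq (by linarith))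
    -- (1 + 7b)² - 32 b (1 - b) = (9b - 1)²
    nlinarith [sq_sqrt_two, sq_nonneg (9 * b - 1)]
  nlinarith [sq_sqrt_two, mul_le_mul_of_nonneg_left hs' hb]

theorem not_relSq_matA_matC : ¬ relSq matA matC := by
  intro h
  have hxy : (2 * √2 / 3) ^ 2 + (1 / 3 : ℝ) ^ 2 = 1 := by linarith [sq_sqrt_two]
  have := h.le_sqrt_of_realSymm matA_eq matC_mul_self hxy
  rw [show √2 * (2 * √2 / 3) ^ 2 + √2 * (1 / 3) ^ 2 + 2 * (1 / 2) * (2 * √2 / 3 * (1 / 3))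
      = 11 * √2 / 9 by linear_combination (4 * √2 / 9) * sq_sqrt_two,
    show 16 / 9 * (2 * √2 / 3) ^ 2 + 11 / 3 * (1 / 3) ^ 2 + 2 * (8 * √2 / 9) * (2 * √2 / 3 * (1 / 3))
      = (5 / 3) ^ 2 by linear_combination (32 / 27) * sq_sqrt_two,
    Real.sqrt_sq (by norm_num)] at this
  nlinarith [sq_sqrt_two, Real.sqrt_nonneg 2]

theorem stmt11 :
    matA.PosSemidef ∧ matB.PosSemidef ∧ matC.PosSemidef ∧
      relSq matA matB ∧ relSq matB matC ∧ ¬ relSq matA matC := by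
  refine ⟨?_, ?_, nonneg_iff_posSemidef.mp (matC_eq_abs ▸ CFC.abs_nonneg matY),
    relSq_matA_matB, relSq_matB_matC, not_relSq_matA_matC⟩
  · rw [matA_eq]
    exact posSemidef_realSymm (by positivity) (by positivity) (by linarith [sq_sqrt_two])
  · rw [matB_eq]
    exact posSemidef_realSymm (by positivity) (by positivity) (by linarith [sq_sqrt_two])
end

section
/- For every ε > 0 and the 2×2 matrices A = [[√2, 1/2],[1/2, √2]], B = (1/3)[[4, √2],[√2, 5]], the relation (A + ε)² ⊴ (B + ε)² fails; indeed the minimum over t > 0 of (9ε² + 24ε + 18)/(18t) + t/2 is √(9ε² + 24ε + 18)/3, and (√2 + ε)² > ε² + (8/3)ε + 2. -/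
open Matrix
open scoped ComplexOrder

theorem stmt13 : ∀ ε : ℝ, 0 < ε →
    ¬ relSq (matA + (ε : ℂ) • 1) (matB + (ε : ℂ) • 1) ∧
      IsLeast {y : ℝ | ∃ t : ℝ, 0 < t ∧
          y = (9 * ε ^ 2 + 24 * ε + 18) / (18 * t) + t / 2}
        (Real.sqrt (9 * ε ^ 2 + 24 * ε + 18) / 3) ∧
      (Real.sqrt 2 + ε) ^ 2 > ε ^ 2 + (8 / 3) * ε + 2 := by
  intro ε hε
  have hs2 : Real.sqrt 2 ^ 2 = 2 := Real.sq_sqrt (by norm_num)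
  have hs2pos : (1:ℝ) < Real.sqrt 2 := by nlinarith [Real.sqrt_nonneg 2]
  have hgt : (Real.sqrt 2 + ε) ^ 2 > ε ^ 2 + (8 / 3) * ε + 2 := by nlinarith
  refine ⟨?_, ?_, hgt⟩
  · intro h
    set ξ : EuclideanSpace ℂ (Fin 2) := (WithLp.equiv 2 (Fin 2 → ℂ)).symm ![1, 0] with hξ
    have hnorm : ‖ξ‖ = 1 := by
      simp [hξ, EuclideanSpace.norm_eq, Fin.sum_univ_two]
    have h1 : (star (ξ : Fin 2 → ℂ) ⬝ᵥ (matA + (ε:ℂ) • 1).mulVec ξ).re = Real.sqrt 2 + ε := by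
      simp [hξ, matA, dotProduct, Matrix.mulVec, Fin.sum_univ_two, Matrix.one_apply]
    have h2 : (star (ξ : Fin 2 → ℂ) ⬝ᵥ
        (((matB + (ε:ℂ) • 1)) * ((matB + (ε:ℂ) • 1))).mulVec ξ).re = ε ^ 2 + (8/3) * ε + 2 := by
      simp [hξ, matB, Matrix.mul_apply, dotProduct, Matrix.mulVec, Fin.sum_univ_two,
        Matrix.one_apply]
      nlinarith
    have := h ξ hnorm
    rw [h1, h2] at this
    have hlt : Real.sqrt (ε ^ 2 + (8/3) * ε + 2) < Real.sqrt 2 + ε := by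
      rw [show Real.sqrt 2 + ε = Real.sqrt ((Real.sqrt 2 + ε) ^ 2) by
        rw [Real.sqrt_sq (by positivity)]]
      exact Real.sqrt_lt_sqrt (by nlinarith) hgt
    linarith
  · set c : ℝ := 9 * ε ^ 2 + 24 * ε + 18 with hc
    have hcpos : 0 < c := by nlinarith
    set s := Real.sqrt c with hsdef
    have hspos : 0 < s := Real.sqrt_pos.mpr hcpos
    have hs : s ^ 2 = c := Real.sq_sqrt hcpos.le
    constructor
    · exact ⟨s / 3, by positivity, by
        rw [← hs]; field_simp; ring⟩
    · rintro y ⟨t, ht, rfl⟩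
      rw [← hs, div_add_div _ _ (by positivity) two_ne_zero, le_div_iff₀ (by positivity)]
      nlinarith [sq_nonneg (s - 3 * t)]
end

section
/- Let B be a bounded positive invertible operator and P an orthogonal projection on a complex Hilbert space H. Then ‖P^⊥ B P‖² ≤ ‖B‖ · ‖P B P − (P B⁻¹ P)⁻¹‖, where (P B⁻¹ P)⁻¹ is the inverse of the compression on PH. -/
/-!
Since `X` inverts the compression of `B⁻¹` to the range of `P`, the form `⟪X x, x⟫` is the
minimum of `⟪B y, y⟫` over the fibre `P y = P x`, attained at `y = B⁻¹ X x`. Testing it against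
`y = P x - ‖B‖⁻¹ (1 - P) B P x` gives `‖(1 - P) B P x‖² ≤ ‖B‖ ⟪(P B P - X) x, x⟫`, and the right
side is at most `‖B‖ ‖P B P - X‖ ‖x‖²`.
-/

open scoped InnerProductSpace

open RCLike

section

variable {𝕜 E : Type*} [RCLike 𝕜] [NormedAddCommGroup E] [InnerProductSpace 𝕜 E]

theorem ContinuousLinearMap.opNorm_sq_le_of_norm_apply_sq_le {F : Type*} [NormedAddCommGroup F]
    [NormedSpace 𝕜 F] (T : E →L[𝕜] F) {C : ℝ} (hC : 0 ≤ C)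
    (h : ∀ x, ‖T x‖ ^ 2 ≤ C * ‖x‖ ^ 2) : ‖T‖ ^ 2 ≤ C := by
  refine (Real.le_sqrt (norm_nonneg T) hC).mp (T.opNorm_le_bound (Real.sqrt_nonneg C) fun x => ?_)
  calc ‖T x‖ ≤ √(C * ‖x‖ ^ 2) := Real.le_sqrt_of_sq_le (h x)
    _ = √C * ‖x‖ := by rw [Real.sqrt_mul hC, Real.sqrt_sq (norm_nonneg x)]

theorem ContinuousLinearMap.re_inner_apply_self_le (S : E →L[𝕜] E) (x : E) :
    re ⟪S x, x⟫_𝕜 ≤ ‖S‖ * ‖x‖ ^ 2 :=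
  calc re ⟪S x, x⟫_𝕜 ≤ ‖S x‖ * ‖x‖ := re_inner_le_norm _ _
    _ ≤ ‖S‖ * ‖x‖ * ‖x‖ := by gcongr; exact S.le_opNorm x
    _ = ‖S‖ * ‖x‖ ^ 2 := by ring

theorem ContinuousLinearMap.IsPositive.re_inner_le_add_of_inner_eq_zero {B : E →L[𝕜] E}
    (hB : B.IsPositive) {z w : E} (h : ⟪B z, w⟫_𝕜 = 0) :
    re ⟪B z, z⟫_𝕜 ≤ re ⟪B (z + w), z + w⟫_𝕜 := by
  have h' : ⟪B w, z⟫_𝕜 = 0 := by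
    rw [hB.inner_left_eq_inner_right, ← inner_conj_symm, h, map_zero]
  have hw := hB.re_inner_nonneg_left w
  simp only [map_add, inner_add_left, inner_add_right, h, h', add_zero, zero_add]
  linarith

theorem norm_sq_le_mul_re_inner_sub {B : E →L[𝕜] E} (hB : (B : E →ₗ[𝕜] E).IsSymmetric)
    {p q : E} (hpq : re ⟪B p, q⟫_𝕜 = ‖q‖ ^ 2) :
    ‖q‖ ^ 2 ≤ ‖B‖ * (re ⟪B p, p⟫_𝕜
      - re ⟪B (p - ((‖B‖⁻¹ : ℝ) : 𝕜) • q), p - ((‖B‖⁻¹ : ℝ) : 𝕜) • q⟫_𝕜) := by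
  rcases eq_or_ne B 0 with rfl | hB0
  · simp only [zero_apply, inner_zero_left, map_zero] at hpq
    simp [← hpq]
  have hnorm : 0 < ‖B‖ := norm_pos_iff.mpr hB0
  have hqp : re ⟪B q, p⟫_𝕜 = ‖q‖ ^ 2 := by
    have hsymm : ⟪B q, p⟫_𝕜 = ⟪q, B p⟫_𝕜 := hB q p
    rw [hsymm, ← inner_conj_symm, conj_re, hpq]
  have hqq := B.re_inner_apply_self_le q
  have expand : re ⟪B (p - ((‖B‖⁻¹ : ℝ) : 𝕜) • q), p - ((‖B‖⁻¹ : ℝ) : 𝕜) • q⟫_𝕜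
      = re ⟪B p, p⟫_𝕜 - 2 * ‖B‖⁻¹ * ‖q‖ ^ 2 + ‖B‖⁻¹ ^ 2 * re ⟪B q, q⟫_𝕜 := by
    simp only [map_sub, map_smul, inner_sub_left, inner_sub_right, inner_smul_left,
      inner_smul_right, conj_ofReal, re_ofReal_mul, hpq, hqp]
    ring
  rw [expand]
  field_simp
  nlinarith

theorem re_inner_apply_self_le_of_apply_eq {B B' P X : E →L[𝕜] E} (hB : B.IsPositive)
    (hBB' : B * B' = 1) (hP : (P : E →ₗ[𝕜] E).IsSymmetric) (hPX : P * X = X)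
    (hX : P * B' * X = P) {x y : E} (hy : P y = P x) :
    re ⟪X x, x⟫_𝕜 ≤ re ⟪B y, y⟫_𝕜 := by
  have hPsymm (u v : E) : ⟪P u, v⟫_𝕜 = ⟪u, P v⟫_𝕜 := hP u v
  -- the minimiser: `B z = X x` lies in the range of `P`, which is orthogonal to `ker P`
  set z := B' (X x)
  have hBz : B z = X x := by rw [← mul_apply_eq_comp, hBB', one_apply_eq_self]
  have hPz : P z = P x := by rw [← mul_apply_eq_comp, ← mul_apply_eq_comp, hX]
  have hXP (v : E) : ⟪X x, v⟫_𝕜 = ⟪X x, P v⟫_𝕜 := by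
    rw [← hPsymm, ← mul_apply_eq_comp, hPX]
  have horth : ⟪B z, y - z⟫_𝕜 = 0 := by
    rw [hBz, hXP, map_sub, hy, hPz, sub_self, inner_zero_right]
  calc re ⟪X x, x⟫_𝕜 = re ⟪B z, z⟫_𝕜 := by rw [hBz, hXP z, hXP x, hPz]
    _ ≤ re ⟪B (z + (y - z)), z + (y - z)⟫_𝕜 := hB.re_inner_le_add_of_inner_eq_zero horth
    _ = re ⟪B y, y⟫_𝕜 := by rw [add_sub_cancel]

theorem norm_apply_sq_le_re_inner_schur {B B' P X : E →L[𝕜] E} (hB : B.IsPositive)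
    (hBB' : B * B' = 1) (hP : (P : E →ₗ[𝕜] E).IsSymmetric) (hPP : P * P = P) (hPX : P * X = X)
    (hX : P * B' * X = P) (x : E) :
    ‖((1 - P) * B * P) x‖ ^ 2 ≤ ‖B‖ * re ⟪(P * B * P - X) x, x⟫_𝕜 := by
  have hPsymm (u v : E) : ⟪P u, v⟫_𝕜 = ⟪u, P v⟫_𝕜 := hP u v
  set p := P x
  set q := B p - P (B p)
  have hPp : P p = p := by rw [← mul_apply_eq_comp, hPP]
  have hPq : P q = 0 := by rw [map_sub, ← mul_apply_eq_comp P P, hPP, sub_self]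
  have hpq : re ⟪B p, q⟫_𝕜 = ‖q‖ ^ 2 := by
    have hq : ⟪q, q⟫_𝕜 = ⟪B p, q⟫_𝕜 := by
      rw [inner_sub_left, hPsymm, hPq, inner_zero_right, sub_zero]
    rw [← hq, inner_self_eq_norm_sq]
  set y := p - ((‖B‖⁻¹ : ℝ) : 𝕜) • q
  have hy : P y = P x := by rw [map_sub, map_smul, hPq, smul_zero, sub_zero, hPp]
  have hform : re ⟪(P * B * P - X) x, x⟫_𝕜 = re ⟪B p, p⟫_𝕜 - re ⟪X x, x⟫_𝕜 := by
    rw [sub_apply, inner_sub_left, map_sub, mul_apply_eq_comp, mul_apply_eq_comp, hPsymm]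
  calc ‖((1 - P) * B * P) x‖ ^ 2 = ‖q‖ ^ 2 := by
        rw [mul_apply_eq_comp, mul_apply_eq_comp, sub_apply, one_apply_eq_self]
    _ ≤ ‖B‖ * (re ⟪B p, p⟫_𝕜 - re ⟪B y, y⟫_𝕜) := norm_sq_le_mul_re_inner_sub hB.isSymmetric hpq
    _ ≤ ‖B‖ * (re ⟪B p, p⟫_𝕜 - re ⟪X x, x⟫_𝕜) := by
      gcongr ‖B‖ * (_ - ?_)
      exact re_inner_apply_self_le_of_apply_eq hB hBB' hP hPX hX hy
    _ = ‖B‖ * re ⟪(P * B * P - X) x, x⟫_𝕜 := by rw [hform]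

end

variable {H : Type*} [NormedAddCommGroup H] [InnerProductSpace ℂ H] [CompleteSpace H]

theorem stmt15_general (B B' P X : H →L[ℂ] H) (hB : 0 ≤ B)
    (hBB' : B * B' = 1)
    (hPsa : IsSelfAdjoint P) (hPidem : P * P = P)
    (hX : X = P * X * P) (hX2 : (P * B' * P) * X = P) :
    ‖(1 - P) * B * P‖ ^ 2 ≤ ‖B‖ * ‖P * B * P - X‖ := by
  have hPX : P * X = X := by rw [hX, ← mul_assoc, ← mul_assoc, hPidem]
  have hPB'X : P * B' * X = P := by simpa only [mul_assoc, hPX] using hX2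
  refine ContinuousLinearMap.opNorm_sq_le_of_norm_apply_sq_le _ (by positivity) fun x => ?_
  calc ‖((1 - P) * B * P) x‖ ^ 2 ≤ ‖B‖ * re ⟪(P * B * P - X) x, x⟫_ℂ :=
        norm_apply_sq_le_re_inner_schur ((ContinuousLinearMap.nonneg_iff_isPositive B).mp hB) hBB'
          hPsa.isSymmetric hPidem hPX hPB'X x
    _ ≤ ‖B‖ * (‖P * B * P - X‖ * ‖x‖ ^ 2) := by
      gcongr; exact (P * B * P - X).re_inner_apply_self_le x
    _ = ‖B‖ * ‖P * B * P - X‖ * ‖x‖ ^ 2 := by ring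

theorem stmt15 (B B' P X : H →L[ℂ] H) (hB : 0 ≤ B)
    (hBB' : B * B' = 1) (hB'B : B' * B = 1)
    (hPsa : IsSelfAdjoint P) (hPidem : P * P = P)
    (hX : X = P * X * P) (hX1 : X * (P * B' * P) = P) (hX2 : (P * B' * P) * X = P) :
    ‖(1 - P) * B * P‖ ^ 2 ≤ ‖B‖ * ‖P * B * P - X‖ :=
  stmt15_general B B' P X hB hBB' hPsa hPidem hX hX2
end
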